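/- Let d ≥ 1, let A be a symmetric d×d real matrix with operator norm ‖A‖ ≤ 1 and maximum column norm ‖A‖_{1→2} ≤ 1, and let η > 0, ε ∈ ℝ. Then for every integer T ≥ 1, ‖E[B_T]‖_{1→2} ≤ η ‖E[B_{T−1}]‖ + (1 + η) ‖E[B_{T−1}]‖_{1→2} + η² d² ‖diag(E[B_{T−1}])‖. -/

import Mathlib

open Matrix BigOperators

/-- The rank-one sample matrix `A_{(i,j)} = d² A_{ij} e_i e_jᵀ`. -/
noncomputable def sampleMat {d : ℕ} (A : Matrix (Fin d) (Fin d) ℝ) (p : Fin d × Fin d) :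
    Matrix (Fin d) (Fin d) ℝ :=
  ((d : ℝ) ^ 2 * A p.1 p.2) • Matrix.single p.1 p.2 1

/-- `P_T(ω) = (I + η A_{(i_T,j_T)}) ⋯ (I + η A_{(i_1,j_1)})`. -/
noncomputable def prodMat {d : ℕ} (A : Matrix (Fin d) (Fin d) ℝ) (η : ℝ) :
    (T : ℕ) → (Fin T → Fin d × Fin d) → Matrix (Fin d) (Fin d) ℝ
  | 0, _ => 1
  | (T + 1), ω => (1 + η • sampleMat A (ω (Fin.last T))) * prodMat A η T (fun t => ω t.castSucc)

/-- `E[B_T]`: the average of `P_T(ω)ᵀ ((1-ε)I - A) P_T(ω)` over all sequences `ω`. -/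
noncomputable def EB {d : ℕ} (A : Matrix (Fin d) (Fin d) ℝ) (η ε : ℝ) (T : ℕ) :
    Matrix (Fin d) (Fin d) ℝ :=
  (Fintype.card (Fin T → Fin d × Fin d) : ℝ)⁻¹ •
    ∑ ω : Fin T → Fin d × Fin d,
      (prodMat A η T ω)ᵀ * ((1 - ε) • (1 : Matrix (Fin d) (Fin d) ℝ) - A) * prodMat A η T ω

/-- The operator (spectral) norm of a matrix, as a map on Euclidean space. -/
noncomputable def opNorm {d : ℕ} (M : Matrix (Fin d) (Fin d) ℝ) : ℝ :=
  ‖Matrix.toEuclideanCLM (𝕜 := ℝ) M‖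

/-- The maximum Euclidean column norm `‖M‖_{1→2} = max_j ‖M e_j‖₂`. -/
noncomputable def colNorm {d : ℕ} (M : Matrix (Fin d) (Fin d) ℝ) : ℝ :=
  ⨆ j : Fin d, Real.sqrt (∑ i : Fin d, (M i j) ^ 2)

/-- `diag(M)`: the diagonal matrix with the same diagonal as `M`. -/
def diagPart {d : ℕ} (M : Matrix (Fin d) (Fin d) ℝ) : Matrix (Fin d) (Fin d) ℝ :=
  Matrix.diagonal M.diag

/-! Conditioning on the first sample gives the exact recursion
`E[B_{T+1}] = B + η AᵀB + η BA + η² diag(d² ∑ᵢ Aᵢⱼ² Bᵢᵢ)` with `B = E[B_T]`: the samples `A_p`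
average to `A`, and each sandwich `A_pᵀ B A_p` is a multiple of a diagonal unit matrix. The bound
then follows from the triangle inequality for `‖·‖_{1→2}`, from `‖M N‖_{1→2} ≤ ‖M‖ ‖N‖_{1→2}` and
`‖Aᵀ‖ = ‖A‖`, and from `|∑ᵢ Aᵢⱼ² Bᵢᵢ| ≤ maxᵢ |Bᵢᵢ| = ‖diag B‖`, since `∑ᵢ Aᵢⱼ² ≤ ‖A‖²_{1→2} ≤ 1`. -/

section Recursion

variable {d : ℕ} (A : Matrix (Fin d) (Fin d) ℝ) (η : ℝ)

lemma prodMat_cons :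
    ∀ (T : ℕ) (ω : Fin T → Fin d × Fin d) (p : Fin d × Fin d),
      prodMat A η (T + 1) (Fin.cons p ω) = prodMat A η T ω * (1 + η • sampleMat A p)
  | 0, _, _ => by simp [prodMat]
  | T + 1, ω, p => by
    have hlast : (Fin.cons p ω : Fin (T + 2) → Fin d × Fin d) (Fin.last (T + 1)) =
        ω (Fin.last T) := by
      rw [← Fin.succ_last, Fin.cons_succ]
    have hinit : (fun t : Fin (T + 1) => (Fin.cons p ω : Fin (T + 2) → Fin d × Fin d) t.castSucc)
        = Fin.cons p (fun t : Fin T => ω t.castSucc) := by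
      funext t
      refine Fin.cases rfl (fun i => ?_) t
      rw [← Fin.succ_castSucc, Fin.cons_succ, Fin.cons_succ]
    rw [prodMat, hlast, hinit, prodMat_cons T, prodMat, mul_assoc]

lemma EB_succ (ε : ℝ) (T : ℕ) :
    EB A η ε (T + 1) = ((d : ℝ) ^ 2)⁻¹ •
      ∑ p : Fin d × Fin d, (1 + η • sampleMat A p)ᵀ * EB A η ε T * (1 + η • sampleMat A p) := by
  set C := (1 - ε) • (1 : Matrix (Fin d) (Fin d) ℝ) - A
  have hsum :
      ∑ ω : Fin (T + 1) → Fin d × Fin d, (prodMat A η (T + 1) ω)ᵀ * C * prodMat A η (T + 1) ω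
      = ∑ p : Fin d × Fin d, (1 + η • sampleMat A p)ᵀ *
          (∑ ω : Fin T → Fin d × Fin d, (prodMat A η T ω)ᵀ * C * prodMat A η T ω) *
          (1 + η • sampleMat A p) := by
    rw [← (Fin.consEquiv fun _ : Fin (T + 1) => Fin d × Fin d).sum_comp, Fintype.sum_prod_type]
    refine Finset.sum_congr rfl fun p _ => ?_
    rw [Finset.mul_sum, Finset.sum_mul]
    refine Finset.sum_congr rfl fun ω _ => ?_
    change (prodMat A η (T + 1) (Fin.cons p ω))ᵀ * C * prodMat A η (T + 1) (Fin.cons p ω) = _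
    rw [prodMat_cons, transpose_mul]
    noncomm_ring
  have hcard : (Fintype.card (Fin (T + 1) → Fin d × Fin d) : ℝ)
      = (d : ℝ) ^ 2 * Fintype.card (Fin T → Fin d × Fin d) := by
    simp only [Fintype.card_fun, Fintype.card_prod, Fintype.card_fin]
    push_cast
    ring
  rw [EB, hsum, hcard, mul_inv, mul_smul]
  congr 1
  rw [Finset.smul_sum]
  simp only [EB, C, Matrix.mul_smul, Matrix.smul_mul]

lemma sum_sampleMat : ∑ p : Fin d × Fin d, sampleMat A p = (d : ℝ) ^ 2 • A := by
  rw [Fintype.sum_prod_type, matrix_eq_sum_single ((d : ℝ) ^ 2 • A)]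
  simp only [sampleMat, smul_single, smul_eq_mul, mul_one, Matrix.smul_apply]

lemma sampleMat_transpose_mul_mul_sampleMat (B : Matrix (Fin d) (Fin d) ℝ) (i j : Fin d) :
    (sampleMat A (i, j))ᵀ * B * sampleMat A (i, j)
      = single j j ((d : ℝ) ^ 4 * A i j ^ 2 * B i i) := by
  simp only [sampleMat, smul_single, smul_eq_mul, mul_one, transpose_single,
    single_mul_mul_single]
  ring_nf

lemma sum_sampleMat_transpose_mul_mul_sampleMat (B : Matrix (Fin d) (Fin d) ℝ) :
    ∑ p : Fin d × Fin d, (sampleMat A p)ᵀ * B * sampleMat A p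
      = (d : ℝ) ^ 2 • diagonal (fun j => (d : ℝ) ^ 2 * ∑ i, A i j ^ 2 * B i i) := by
  rw [Fintype.sum_prod_type, Finset.sum_comm, ← sum_single_eq_diagonal, Finset.smul_sum]
  refine Finset.sum_congr rfl fun j _ => ?_
  simp only [sampleMat_transpose_mul_mul_sampleMat, smul_single, smul_eq_mul, Finset.mul_sum]
  rw [← singleAddMonoidHom_apply, map_sum]
  refine Finset.sum_congr rfl fun i _ => ?_
  rw [singleAddMonoidHom_apply]
  ring_nf

lemma avg_conj_sampleMat (hd : d ≠ 0) (B : Matrix (Fin d) (Fin d) ℝ) :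
    ((d : ℝ) ^ 2)⁻¹ • ∑ p : Fin d × Fin d, (1 + η • sampleMat A p)ᵀ * B * (1 + η • sampleMat A p)
      = B + η • (Aᵀ * B) + η • (B * A)
        + η ^ 2 • diagonal (fun j => (d : ℝ) ^ 2 * ∑ i, A i j ^ 2 * B i i) := by
  have hexpand : ∀ p : Fin d × Fin d, (1 + η • sampleMat A p)ᵀ * B * (1 + η • sampleMat A p)
      = B + η • ((sampleMat A p)ᵀ * B) + η • (B * sampleMat A p)
        + η ^ 2 • ((sampleMat A p)ᵀ * B * sampleMat A p) := by
    intro p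
    simp only [transpose_add, transpose_one, transpose_smul, Matrix.add_mul, Matrix.mul_add,
      Matrix.smul_mul, Matrix.mul_smul, Matrix.one_mul, Matrix.mul_one, smul_smul, smul_add, sq]
    abel
  have hd2 : (d : ℝ) ^ 2 ≠ 0 := pow_ne_zero 2 (Nat.cast_ne_zero.2 hd)
  simp only [hexpand, Finset.sum_add_distrib, ← Finset.smul_sum, ← Finset.sum_mul,
    ← transpose_sum, ← Finset.mul_sum, sum_sampleMat, sum_sampleMat_transpose_mul_mul_sampleMat,
    Finset.sum_const, Finset.card_univ, Fintype.card_prod, Fintype.card_fin, transpose_smul,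
    Matrix.smul_mul, Matrix.mul_smul, ← Nat.cast_smul_eq_nsmul ℝ, smul_add, smul_smul]
  push_cast
  match_scalars <;> field_simp

lemma EB_succ_eq (hd : d ≠ 0) (ε : ℝ) (T : ℕ) :
    EB A η ε (T + 1) = EB A η ε T + η • (Aᵀ * EB A η ε T) + η • (EB A η ε T * A)
      + η ^ 2 • diagonal (fun j => (d : ℝ) ^ 2 * ∑ i, A i j ^ 2 * EB A η ε T i i) := by
  rw [EB_succ, avg_conj_sampleMat A η hd]

end Recursion

section ColumnNorm

open scoped Matrix.Norms.L2Operator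

variable {d : ℕ}

noncomputable def colVec (M : Matrix (Fin d) (Fin d) ℝ) (j : Fin d) : EuclideanSpace ℝ (Fin d) :=
  WithLp.toLp 2 (fun i => M i j)

lemma norm_colVec (M : Matrix (Fin d) (Fin d) ℝ) (j : Fin d) :
    ‖colVec M j‖ = √(∑ i, M i j ^ 2) := by
  simp only [colVec, EuclideanSpace.norm_eq, Real.norm_eq_abs, sq_abs]

lemma colNorm_eq_iSup_norm_colVec (M : Matrix (Fin d) (Fin d) ℝ) :
    colNorm M = ⨆ j, ‖colVec M j‖ := by
  simp only [colNorm, norm_colVec]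

lemma colNorm_nonneg (M : Matrix (Fin d) (Fin d) ℝ) : 0 ≤ colNorm M :=
  Real.iSup_nonneg fun _ => Real.sqrt_nonneg _

lemma norm_colVec_le_colNorm (M : Matrix (Fin d) (Fin d) ℝ) (j : Fin d) :
    ‖colVec M j‖ ≤ colNorm M := by
  rw [colNorm_eq_iSup_norm_colVec]
  exact le_ciSup (Set.finite_range fun j => ‖colVec M j‖).bddAbove j

lemma colNorm_le {M : Matrix (Fin d) (Fin d) ℝ} {c : ℝ} (hc : 0 ≤ c)
    (h : ∀ j, ‖colVec M j‖ ≤ c) : colNorm M ≤ c := by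
  rw [colNorm_eq_iSup_norm_colVec]
  exact Real.iSup_le h hc

lemma colNorm_add_le (M N : Matrix (Fin d) (Fin d) ℝ) :
    colNorm (M + N) ≤ colNorm M + colNorm N :=
  colNorm_le (add_nonneg (colNorm_nonneg M) (colNorm_nonneg N)) fun j =>
    (norm_add_le (colVec M j) (colVec N j)).trans
      (add_le_add (norm_colVec_le_colNorm M j) (norm_colVec_le_colNorm N j))

lemma colNorm_smul (c : ℝ) (M : Matrix (Fin d) (Fin d) ℝ) :
    colNorm (c • M) = |c| * colNorm M := by
  have h : ∀ j, colVec (c • M) j = c • colVec M j := fun _ => rfl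
  simp only [colNorm_eq_iSup_norm_colVec, h, norm_smul, Real.norm_eq_abs,
    Real.mul_iSup_of_nonneg (abs_nonneg c)]

lemma colVec_mul (M N : Matrix (Fin d) (Fin d) ℝ) (j : Fin d) :
    colVec (M * N) j = toEuclideanCLM (𝕜 := ℝ) M (colVec N j) := rfl

lemma colNorm_mul_le (M N : Matrix (Fin d) (Fin d) ℝ) :
    colNorm (M * N) ≤ opNorm M * colNorm N :=
  colNorm_le (mul_nonneg (norm_nonneg _) (colNorm_nonneg N)) fun j => by
    rw [colVec_mul]
    exact (ContinuousLinearMap.le_opNorm _ _).trans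
      (mul_le_mul_of_nonneg_left (norm_colVec_le_colNorm N j) (norm_nonneg _))

lemma colNorm_diagonal_le (v : Fin d → ℝ) : colNorm (diagonal v) ≤ ‖v‖ :=
  colNorm_le (norm_nonneg v) fun j => by
    have h : colVec (diagonal v) j = EuclideanSpace.single j (v j) := by
      ext i
      by_cases hij : i = j
      · subst hij; simp [colVec]
      · simp [colVec, hij]
    rw [h, PiLp.norm_single]
    exact norm_le_pi_norm v j

lemma opNorm_eq_norm (M : Matrix (Fin d) (Fin d) ℝ) : opNorm M = ‖M‖ := rfl

lemma opNorm_transpose (M : Matrix (Fin d) (Fin d) ℝ) : opNorm Mᵀ = opNorm M := by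
  rw [opNorm_eq_norm, opNorm_eq_norm, ← conjTranspose_eq_transpose_of_trivial,
    l2_opNorm_conjTranspose]

lemma opNorm_diagPart (M : Matrix (Fin d) (Fin d) ℝ) : opNorm (diagPart M) = ‖M.diag‖ :=
  l2_opNorm_diagonal _

lemma sum_sq_le_one_of_colNorm_le_one {M : Matrix (Fin d) (Fin d) ℝ} (h : colNorm M ≤ 1)
    (j : Fin d) : ∑ i, M i j ^ 2 ≤ 1 := by
  have := (norm_colVec_le_colNorm M j).trans h
  rwa [norm_colVec, Real.sqrt_le_one] at this

end ColumnNorm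

lemma abs_sum_sq_mul_le_norm {ι : Type*} [Fintype ι] {a : ι → ℝ} (ha : ∑ i, a i ^ 2 ≤ 1)
    (b : ι → ℝ) : |∑ i, a i ^ 2 * b i| ≤ ‖b‖ :=
  calc |∑ i, a i ^ 2 * b i| ≤ ∑ i, a i ^ 2 * ‖b‖ := by
        refine (Finset.abs_sum_le_sum_abs _ _).trans (Finset.sum_le_sum fun i _ => ?_)
        rw [abs_mul, abs_sq]
        exact mul_le_mul_of_nonneg_left (norm_le_pi_norm b i) (sq_nonneg _)
    _ = (∑ i, a i ^ 2) * ‖b‖ := Finset.sum_mul _ _ _ |>.symm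
    _ ≤ ‖b‖ := mul_le_of_le_one_left (norm_nonneg b) ha

lemma colNorm_diagonal_sum_sq_mul_le {d : ℕ} {A : Matrix (Fin d) (Fin d) ℝ} (hA : colNorm A ≤ 1)
    (B : Matrix (Fin d) (Fin d) ℝ) :
    colNorm (diagonal fun j => (d : ℝ) ^ 2 * ∑ i, A i j ^ 2 * B i i)
      ≤ (d : ℝ) ^ 2 * opNorm (diagPart B) := by
  rw [opNorm_diagPart]
  refine (colNorm_diagonal_le _).trans <| (pi_norm_le_iff_of_nonneg (by positivity)).2 fun j => ?_
  rw [Real.norm_eq_abs, abs_mul, abs_sq]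
  exact mul_le_mul_of_nonneg_left
    (abs_sum_sq_mul_le_norm (sum_sq_le_one_of_colNorm_le_one hA j) B.diag) (sq_nonneg _)

theorem stmt5_general {d : ℕ} (hd : 1 ≤ d) (A : Matrix (Fin d) (Fin d) ℝ)
    (hAop : opNorm A ≤ 1) (hAcol : colNorm A ≤ 1) (η ε : ℝ) (hη : 0 < η)
    (T : ℕ) (hT : 1 ≤ T) :
    colNorm (EB A η ε T)
      ≤ η * opNorm (EB A η ε (T - 1)) + (1 + η) * colNorm (EB A η ε (T - 1))
        + η ^ 2 * (d : ℝ) ^ 2 * opNorm (diagPart (EB A η ε (T - 1))) := by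
  obtain ⟨n, rfl⟩ := Nat.exists_eq_add_of_le' hT
  rw [Nat.add_sub_cancel, EB_succ_eq A η (by omega)]
  set B := EB A η ε n
  have hAB : colNorm (Aᵀ * B) ≤ colNorm B :=
    (colNorm_mul_le Aᵀ B).trans <| mul_le_of_le_one_left (colNorm_nonneg B) <|
      (opNorm_transpose A).trans_le hAop
  have hBA : colNorm (B * A) ≤ opNorm B :=
    (colNorm_mul_le B A).trans <| mul_le_of_le_one_right (norm_nonneg _) hAcol
  set D := diagonal fun j => (d : ℝ) ^ 2 * ∑ i, A i j ^ 2 * B i i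
  have hD : colNorm D ≤ (d : ℝ) ^ 2 * opNorm (diagPart B) := colNorm_diagonal_sum_sq_mul_le hAcol B
  have hsplit := (colNorm_add_le (B + η • (Aᵀ * B) + η • (B * A)) (η ^ 2 • D)).trans <|
    add_le_add_left ((colNorm_add_le (B + η • (Aᵀ * B)) (η • (B * A))).trans <|
      add_le_add_left (colNorm_add_le B (η • (Aᵀ * B))) _) _
  rw [colNorm_smul, colNorm_smul, colNorm_smul, abs_of_pos hη, abs_of_nonneg (sq_nonneg η)]
    at hsplit
  refine hsplit.trans ?_
  calc colNorm B + η * colNorm (Aᵀ * B) + η * colNorm (B * A) + η ^ 2 * colNorm D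
      ≤ colNorm B + η * colNorm B + η * opNorm B + η ^ 2 * ((d : ℝ) ^ 2 * opNorm (diagPart B)) := by
        gcongr
    _ = _ := by ring

theorem stmt5 {d : ℕ} (hd : 1 ≤ d) (A : Matrix (Fin d) (Fin d) ℝ) (hsymm : A.IsSymm)
    (hAop : opNorm A ≤ 1) (hAcol : colNorm A ≤ 1) (η ε : ℝ) (hη : 0 < η)
    (T : ℕ) (hT : 1 ≤ T) :
    colNorm (EB A η ε T)
      ≤ η * opNorm (EB A η ε (T - 1)) + (1 + η) * colNorm (EB A η ε (T - 1))
        + η ^ 2 * (d : ℝ) ^ 2 * opNorm (diagPart (EB A η ε (T - 1))) :=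
  stmt5_general hd A hAop hAcol η ε hη T hT
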